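/- Let S and A be nonempty finite sets, μ : S×A → ℝ with 0 < μ(s,a) ≤ 1 for all (s,a), D = diag(μ), P a row-stochastic (S×A)×S real matrix, R : S×A → ℝ, γ ∈ (0,1), and X a real (S×A)×n matrix with nonnegative entries and full column rank such that XᵀDX is diagonal. Define B : ℝ^{S×A} → ℝ^{S} by (Bq)(s) = max_{a∈A} q(s,a) and f(θ) = −(1+η) XᵀDX θ + γ XᵀD P B(Xθ) + XᵀDR. Suppose η satisfies both (i) η > max_{π,(s,a)} [ γ (μᵀ P Π_π)(s,a) / (2 μ(s,a)) ] − (2−γ)/2, where the max is over all deterministic policies π : S → A and all (s,a) ∈ S×A, and (ii) 1 + η ≥ ‖(XᵀDX)^{-1}‖_∞ · ‖Xᵀ‖_∞ · ‖X‖_∞. Then f has a unique zero θ_e ∈ ℝⁿ, and every differentiable θ : [0,∞) → ℝⁿ with θ′(t) = f(θ(t)) for all t ≥ 0 satisfies θ(t) → θ_e as t → ∞ (θ_e is the globally asymptotically stable equilibrium of the mean ODE of regularized Q-learning). -/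

import Mathlib

open Matrix

attribute [local instance] Matrix.linftyOpNormedAddCommGroup

/-- The greedy-max operator `(Bq)(s) = max_{a ∈ A} q(s,a)`. -/
noncomputable def greedyMax {S A : Type*} [Fintype A] [Nonempty A]
    (q : S × A → ℝ) : S → ℝ :=
  fun s => Finset.univ.sup' Finset.univ_nonempty fun a => q (s, a)

/-- The mean ODE vector field of regularized Q-learning,
`f(θ) = −(1+η) XᵀDX θ + γ XᵀD P B(Xθ) + XᵀDR`. -/
noncomputable def meanField {S A : Type*} [Fintype S] [Fintype A] [Nonempty A]
    [DecidableEq S] [DecidableEq A] {n : ℕ}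
    (μ : S × A → ℝ) (P : Matrix (S × A) S ℝ) (R : S × A → ℝ) (γ η : ℝ)
    (X : Matrix (S × A) (Fin n) ℝ) (θ : Fin n → ℝ) : Fin n → ℝ :=
  -((1 + η) • ((Xᵀ * diagonal μ * X) *ᵥ θ)) +
    γ • ((Xᵀ * diagonal μ * P) *ᵥ greedyMax (X *ᵥ θ)) + (Xᵀ * diagonal μ) *ᵥ R

/-!
Because `XᵀDX = diag m` with `m > 0`, the field reads `f(θ)_j = -(1+η) m_j θ_j + g(θ)_j` with
`g(θ) = γ XᵀDP B(Xθ) + XᵀDR`. The operator `B` is 1-Lipschitz for the sup norm and `XᵀDP` is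
nonnegative with row sums at most `‖Xᵀ‖_∞`, so condition (ii) makes every `g_j` Lipschitz with
constant `γ (1+η) m_j`. Hence `θ ↦ θ + f(θ) / ((1+η) m)` is a `γ`-contraction, whose fixed point is
the unique zero `θ_e`. The same estimate shows that a short explicit Euler step `θ + h f(θ)` shrinks
`‖θ - θ_e‖_∞` by the factor `1 - hκ`, `κ = (1-γ) min_j (1+η) m_j`, so the right Dini derivative of
`‖θ(t) - θ_e‖_∞` is at most `-κ ‖θ(t) - θ_e‖_∞` and Grönwall's inequality gives exponential decay.
-/

open Filter Topology

section DiagonallyDominatedField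

variable {ι : Type*} [Fintype ι] {F : (ι → ℝ) → ι → ℝ} {a : ι → ℝ} {γ : ℝ}

theorem existsUnique_zero_of_abs_sub_add_mul_le (ha : ∀ j, 0 < a j) (hγ0 : 0 ≤ γ) (hγ1 : γ < 1)
    (hF : ∀ ψ φ j, |F ψ j - F φ j + a j * (ψ j - φ j)| ≤ γ * a j * ‖ψ - φ‖) :
    ∃! θe, F θe = 0 := by
  set G : (ι → ℝ) → ι → ℝ := fun ψ j => ψ j + F ψ j / a j
  have hG : ContractingWith γ.toNNReal G := by
    refine ⟨Real.toNNReal_lt_one.2 hγ1, LipschitzWith.of_dist_le_mul fun ψ φ => ?_⟩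
    rw [dist_eq_norm, dist_eq_norm, Real.coe_toNNReal _ hγ0]
    refine (pi_norm_le_iff_of_nonneg (by positivity)).2 fun j => ?_
    have hGj : (G ψ - G φ) j = (F ψ j - F φ j + a j * (ψ j - φ j)) / a j := by
      have := (ha j).ne'
      simp only [G, Pi.sub_apply]; field_simp; ring
    rw [hGj, Real.norm_eq_abs, abs_div, abs_of_pos (ha j), div_le_iff₀ (ha j), mul_right_comm]
    exact hF ψ φ j
  have hfix : ∀ ψ, G ψ = ψ ↔ F ψ = 0 := fun ψ => by
    simp only [G, funext_iff, add_eq_left, div_eq_zero_iff, (ha _).ne', or_false, Pi.zero_apply]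
  exact ⟨_, (hfix _).1 hG.fixedPoint_isFixedPt, fun ψ hψ => hG.fixedPoint_unique ((hfix ψ).2 hψ)⟩

lemma norm_add_smul_le_of_abs_add_mul_le {u d : ι → ℝ} {h κ : ℝ}
    (hd : ∀ j, |d j + a j * u j| ≤ γ * a j * ‖u‖) (hh : 0 ≤ h) (hha : ∀ j, h * a j ≤ 1)
    (hκ : ∀ j, κ ≤ (1 - γ) * a j) :
    ‖u + h • d‖ ≤ (1 - h * κ) * ‖u‖ := by
  rcases isEmpty_or_nonempty ι with hι | hι
  · rw [Subsingleton.elim (u + h • d) 0, Subsingleton.elim u 0]; simp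
  refine (pi_norm_le_iff_of_nonempty _).2 fun j => ?_
  have hu : |u j| ≤ ‖u‖ := by simpa using norm_le_pi_norm u j
  have hha' : 0 ≤ 1 - h * a j := sub_nonneg.2 (hha j)
  calc ‖(u + h • d) j‖ = |(1 - h * a j) * u j + h * (d j + a j * u j)| := by
        rw [Real.norm_eq_abs]; congr 1; simp only [Pi.add_apply, Pi.smul_apply, smul_eq_mul]; ring
    _ ≤ (1 - h * a j) * ‖u‖ + h * (γ * a j * ‖u‖) := by
        refine (abs_add_le _ _).trans (add_le_add ?_ ?_)
        · rw [abs_mul, abs_of_nonneg hha']; exact mul_le_mul_of_nonneg_left hu hha'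
        · rw [abs_mul, abs_of_nonneg hh]; exact mul_le_mul_of_nonneg_left (hd j) hh
    _ = (1 - h * ((1 - γ) * a j)) * ‖u‖ := by ring
    _ ≤ (1 - h * κ) * ‖u‖ := by gcongr; exact hκ j

lemma frequently_slope_norm_sub_lt {θ : ℝ → ι → ℝ} {θe : ι → ℝ} {t κ r : ℝ}
    (hF : ∀ ψ j, |F ψ j + a j * (ψ j - θe j)| ≤ γ * a j * ‖ψ - θe‖)
    (hκ : ∀ j, κ ≤ (1 - γ) * a j) (hθ : HasDerivAt θ (F (θ t)) t)
    (hr : -κ * ‖θ t - θe‖ < r) :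
    ∃ᶠ z in 𝓝[>] t, (z - t)⁻¹ * (‖θ z - θe‖ - ‖θ t - θe‖) < r := by
  obtain ⟨ρ, hρ, hρr⟩ : ∃ ρ > 0, -κ * ‖θ t - θe‖ + ρ < r :=
    ⟨(r + κ * ‖θ t - θe‖) / 2, by linarith, by linarith⟩
  have hshort : ∀ᶠ z in 𝓝[>] t, ∀ j, (z - t) * a j ≤ 1 := by
    refine eventually_all.2 fun j => nhdsWithin_le_nhds ?_
    have : Tendsto (fun z => (z - t) * a j) (𝓝 t) (𝓝 0) :=
      ((continuous_sub_right t).mul continuous_const).tendsto' t 0 (by simp)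
    exact this.eventually (ge_mem_nhds zero_lt_one)
  have hlin : ∀ᶠ z in 𝓝[>] t, ‖θ z - θ t - (z - t) • F (θ t)‖ ≤ ρ * ‖z - t‖ :=
    nhdsWithin_le_nhds ((hasDerivAt_iff_isLittleO.1 hθ).def hρ)
  refine Eventually.frequently ?_
  filter_upwards [hshort, hlin, self_mem_nhdsWithin] with z hza hz hzt
  have hzt : 0 < z - t := sub_pos.2 hzt
  have hstep := norm_add_smul_le_of_abs_add_mul_le (u := θ t - θe) (d := F (θ t))
    (fun j => by simpa using hF (θ t) j) hzt.le hza hκ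
  have hθz : ‖θ z - θe‖ ≤ (1 - (z - t) * κ) * ‖θ t - θe‖ + ρ * (z - t) := by
    calc ‖θ z - θe‖ = ‖(θ t - θe + (z - t) • F (θ t)) + (θ z - θ t - (z - t) • F (θ t))‖ := by
          congr 1; abel
      _ ≤ _ := (norm_add_le _ _).trans
          (add_le_add hstep (by rwa [Real.norm_of_nonneg hzt.le] at hz))
  rw [inv_mul_lt_iff₀ hzt]
  nlinarith [mul_lt_mul_of_pos_left hρr hzt]

lemma norm_sub_le_mul_exp_of_abs_add_mul_le {θ : ℝ → ι → ℝ} {θe : ι → ℝ} {κ T : ℝ}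
    (hF : ∀ ψ j, |F ψ j + a j * (ψ j - θe j)| ≤ γ * a j * ‖ψ - θe‖)
    (hκ : ∀ j, κ ≤ (1 - γ) * a j) (hθ : ∀ t, 0 ≤ t → HasDerivAt θ (F (θ t)) t) (hT : 0 ≤ T) :
    ‖θ T - θe‖ ≤ ‖θ 0 - θe‖ * Real.exp (-κ * T) := by
  have hcont : ContinuousOn (fun t => ‖θ t - θe‖) (Set.Icc 0 T) := fun t ht =>
    ((hθ t ht.1).continuousAt.sub continuousAt_const).norm.continuousWithinAt
  have := le_gronwallBound_of_liminf_deriv_right_le (f' := fun t => -κ * ‖θ t - θe‖)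
    (ε := 0) hcont (fun t ht r hr => frequently_slope_norm_sub_lt hF hκ (hθ t ht.1) hr) le_rfl
    (fun t _ => (add_zero _).ge) T ⟨hT, le_rfl⟩
  rwa [sub_zero, gronwallBound_ε0] at this

theorem tendsto_of_hasDerivAt_of_abs_add_mul_le {θ : ℝ → ι → ℝ} {θe : ι → ℝ}
    (ha : ∀ j, 0 < a j) (hγ : γ < 1)
    (hF : ∀ ψ j, |F ψ j + a j * (ψ j - θe j)| ≤ γ * a j * ‖ψ - θe‖)
    (hθ : ∀ t, 0 ≤ t → HasDerivAt θ (F (θ t)) t) :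
    Tendsto θ atTop (𝓝 θe) := by
  obtain ⟨κ, hκ0, hκ⟩ : ∃ κ > 0, ∀ j, κ ≤ (1 - γ) * a j := by
    rcases isEmpty_or_nonempty ι with hι | hι
    · exact ⟨1, one_pos, isEmptyElim⟩
    obtain ⟨j₀, -, hj₀⟩ :=
      Finset.univ.exists_min_image (fun j => (1 - γ) * a j) Finset.univ_nonempty
    exact ⟨_, mul_pos (sub_pos.2 hγ) (ha j₀), fun j => hj₀ j (Finset.mem_univ j)⟩
  have hexp : Tendsto (fun t => ‖θ 0 - θe‖ * Real.exp (-κ * t)) atTop (𝓝 0) := by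
    simpa using (Real.tendsto_exp_neg_atTop_nhds_zero.comp
      (tendsto_id.const_mul_atTop hκ0)).const_mul ‖θ 0 - θe‖
  refine tendsto_iff_norm_sub_tendsto_zero.2 (squeeze_zero' (.of_forall fun _ => norm_nonneg _)
    ?_ hexp)
  filter_upwards [eventually_ge_atTop 0] with T hT
  exact norm_sub_le_mul_exp_of_abs_add_mul_le hF hκ hθ hT

end DiagonallyDominatedField

namespace Matrix

variable {m k l : Type*}

lemma sum_norm_apply_le_linfty_opNorm {α : Type*} [Fintype m] [Fintype k] [NormedAddCommGroup α]
    (A : Matrix m k α) (i : m) : ∑ j, ‖A i j‖ ≤ ‖A‖ := by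
  rw [← PiLp.norm_eq_of_L1 (WithLp.toLp 1 (A i))]
  exact norm_le_pi_norm (fun i => WithLp.toLp 1 (A i)) i

lemma abs_mulVec_apply_le [Fintype k] (A : Matrix m k ℝ) (v : k → ℝ) (i : m) :
    |(A *ᵥ v) i| ≤ (∑ j, |A i j|) * ‖v‖ := by
  rw [Finset.sum_mul]
  refine (Finset.abs_sum_le_sum_abs _ _).trans (Finset.sum_le_sum fun j _ => ?_)
  rw [abs_mul]
  exact mul_le_mul_of_nonneg_left (by simpa using norm_le_pi_norm v j) (abs_nonneg _)

lemma IsDiag.inv_abs_apply_le_linfty_opNorm_inv [Fintype k] [DecidableEq k]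
    {M : Matrix k k ℝ} (hM : M.IsDiag) (hM0 : ∀ j, M j j ≠ 0) (j : k) :
    |M j j|⁻¹ ≤ ‖M⁻¹‖ := by
  have hinv : M * diagonal M.diag⁻¹ = 1 := by
    nth_rw 1 [← hM.diagonal_diag]
    rw [diagonal_mul_diagonal, ← diagonal_one]
    exact congrArg diagonal (funext fun j => mul_inv_cancel₀ (hM0 j))
  rw [inv_eq_right_inv hinv, linfty_opNorm_diagonal]
  simpa using norm_le_pi_norm M.diag⁻¹ j

lemma transpose_mul_diagonal_mul_apply [Fintype m] [DecidableEq m] (X : Matrix m k ℝ)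
    (μ : m → ℝ) (Y : Matrix m l ℝ) (i : k) (j : l) :
    (Xᵀ * diagonal μ * Y) i j = ∑ p, X p i * μ p * Y p j := by
  rw [mul_apply]
  simp_rw [mul_diagonal, transpose_apply]

lemma transpose_mul_diagonal_mul_self_apply_pos [Fintype m] [DecidableEq m] [Fintype k]
    [DecidableEq k] {X : Matrix m k ℝ} {μ : m → ℝ} (hμ : ∀ p, 0 < μ p)
    (hX : Function.Injective X.mulVec) (i : k) :
    0 < (Xᵀ * diagonal μ * X) i i := by
  obtain ⟨p, hp⟩ : ∃ p, X p i ≠ 0 := by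
    by_contra! h
    have := hX (a₁ := Pi.single i 1) (a₂ := 0) (by ext p; simp [mulVec_single, h])
    simpa using congrFun this i
  rw [transpose_mul_diagonal_mul_apply]
  refine Finset.sum_pos' (fun q _ => ?_) ⟨p, Finset.mem_univ _, ?_⟩
  · rw [mul_right_comm]; exact mul_nonneg (mul_self_nonneg _) (hμ q).le
  · rw [mul_right_comm]; exact mul_pos (mul_self_pos.2 hp) (hμ p)

lemma sum_abs_transpose_mul_diagonal_mul_apply_le [Fintype m] [DecidableEq m] [Fintype k]
    [Fintype l] {X : Matrix m k ℝ} {μ : m → ℝ} {P : Matrix m l ℝ} (hX : ∀ p i, 0 ≤ X p i)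
    (hμ0 : ∀ p, 0 ≤ μ p) (hμ1 : ∀ p, μ p ≤ 1) (hP0 : ∀ p s, 0 ≤ P p s)
    (hP1 : ∀ p, ∑ s, P p s = 1) (i : k) :
    ∑ s, |(Xᵀ * diagonal μ * P) i s| ≤ ‖Xᵀ‖ :=
  calc ∑ s, |(Xᵀ * diagonal μ * P) i s| = ∑ s, ∑ p, X p i * μ p * P p s := by
        refine Finset.sum_congr rfl fun s _ => ?_
        rw [transpose_mul_diagonal_mul_apply, abs_of_nonneg]
        exact Finset.sum_nonneg fun p _ => mul_nonneg (mul_nonneg (hX p i) (hμ0 p)) (hP0 p s)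
    _ = ∑ p, X p i * μ p := by
        rw [Finset.sum_comm]; simp_rw [← Finset.mul_sum, hP1, mul_one]
    _ ≤ ∑ p, ‖Xᵀ i p‖ := Finset.sum_le_sum fun p _ => by
        rw [transpose_apply, Real.norm_of_nonneg (hX p i)]
        exact mul_le_of_le_one_right (hX p i) (hμ1 p)
    _ ≤ ‖Xᵀ‖ := sum_norm_apply_le_linfty_opNorm _ _

end Matrix

section GreedyMax

variable {S A : Type*} [Fintype S] [Fintype A] [Nonempty A]

lemma greedyMax_sub_le_norm (q q' : S × A → ℝ) (s : S) :
    greedyMax q s - greedyMax q' s ≤ ‖q - q'‖ := by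
  rw [sub_le_iff_le_add]
  refine Finset.sup'_le _ _ fun a _ => ?_
  have hq : q (s, a) - q' (s, a) ≤ ‖q - q'‖ :=
    (le_abs_self _).trans (by simpa using norm_le_pi_norm (q - q') (s, a))
  have hq' : q' (s, a) ≤ greedyMax q' s := Finset.le_sup' (fun a => q' (s, a)) (Finset.mem_univ a)
  linarith

lemma norm_greedyMax_sub_le (q q' : S × A → ℝ) :
    ‖greedyMax q - greedyMax q'‖ ≤ ‖q - q'‖ := by
  refine (pi_norm_le_iff_of_nonneg (norm_nonneg _)).2 fun s => ?_
  rw [Real.norm_eq_abs, Pi.sub_apply, abs_sub_le_iff]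
  exact ⟨greedyMax_sub_le_norm q q' s, norm_sub_rev q q' ▸ greedyMax_sub_le_norm q' q s⟩

end GreedyMax

section MeanField

variable {S A : Type*} [Fintype S] [Fintype A] [Nonempty A] [DecidableEq S] [DecidableEq A]
  {n : ℕ} {μ : S × A → ℝ} {P : Matrix (S × A) S ℝ} {R : S × A → ℝ} {γ η : ℝ}
  {X : Matrix (S × A) (Fin n) ℝ}

lemma meanField_apply (hdiag : (Xᵀ * diagonal μ * X).IsDiag) (θ : Fin n → ℝ) (j : Fin n) :
    meanField μ P R γ η X θ j = -((1 + η) * (Xᵀ * diagonal μ * X) j j * θ j) +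
      γ * ((Xᵀ * diagonal μ * P) *ᵥ greedyMax (X *ᵥ θ)) j + ((Xᵀ * diagonal μ) *ᵥ R) j := by
  have hM : ((Xᵀ * diagonal μ * X) *ᵥ θ) j = (Xᵀ * diagonal μ * X) j j * θ j := by
    nth_rw 1 [← hdiag.diagonal_diag]
    rw [mulVec_diagonal, diag_apply]
  simp [meanField, hM, mul_assoc]

lemma abs_meanField_sub_add_le (hdiag : (Xᵀ * diagonal μ * X).IsDiag) (hγ : 0 ≤ γ)
    (hN : ∀ j, ∑ s, |(Xᵀ * diagonal μ * P) j s| ≤ ‖Xᵀ‖)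
    (hX : ∀ j, ‖Xᵀ‖ * ‖X‖ ≤ (1 + η) * (Xᵀ * diagonal μ * X) j j) (ψ φ : Fin n → ℝ) (j : Fin n) :
    |meanField μ P R γ η X ψ j - meanField μ P R γ η X φ j +
        (1 + η) * (Xᵀ * diagonal μ * X) j j * (ψ j - φ j)| ≤
      γ * ((1 + η) * (Xᵀ * diagonal μ * X) j j) * ‖ψ - φ‖ := by
  have hdiff : meanField μ P R γ η X ψ j - meanField μ P R γ η X φ j +
      (1 + η) * (Xᵀ * diagonal μ * X) j j * (ψ j - φ j) =
      γ * ((Xᵀ * diagonal μ * P) *ᵥ (greedyMax (X *ᵥ ψ) - greedyMax (X *ᵥ φ))) j := by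
    rw [meanField_apply hdiag, meanField_apply hdiag, mulVec_sub, Pi.sub_apply]
    ring
  rw [hdiff, abs_mul, abs_of_nonneg hγ, mul_assoc]
  gcongr
  calc |((Xᵀ * diagonal μ * P) *ᵥ (greedyMax (X *ᵥ ψ) - greedyMax (X *ᵥ φ))) j|
      ≤ (∑ s, |(Xᵀ * diagonal μ * P) j s|) * ‖greedyMax (X *ᵥ ψ) - greedyMax (X *ᵥ φ)‖ :=
        abs_mulVec_apply_le _ _ _
    _ ≤ ‖Xᵀ‖ * (‖X‖ * ‖ψ - φ‖) := by
        refine mul_le_mul (hN j) ((norm_greedyMax_sub_le _ _).trans ?_) (norm_nonneg _)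
          (norm_nonneg _)
        rw [← mulVec_sub]
        exact linfty_opNorm_mulVec _ _
    _ ≤ (1 + η) * (Xᵀ * diagonal μ * X) j j * ‖ψ - φ‖ := by
        rw [← mul_assoc]; exact mul_le_mul_of_nonneg_right (hX j) (norm_nonneg _)

end MeanField

theorem stmt_14_general {S A : Type*} [Fintype S] [Fintype A] [Nonempty A]
    [DecidableEq S] [DecidableEq A] {n : ℕ}
    (μ : S × A → ℝ) (hμ : ∀ p, 0 < μ p ∧ μ p ≤ 1)
    (P : Matrix (S × A) S ℝ) (hP0 : ∀ p s, 0 ≤ P p s) (hP1 : ∀ p, ∑ s, P p s = 1)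
    (R : S × A → ℝ) (γ : ℝ) (hγ : γ ∈ Set.Ioo (0 : ℝ) 1)
    (X : Matrix (S × A) (Fin n) ℝ) (hX0 : ∀ p j, 0 ≤ X p j)
    (hXrank : Function.Injective X.mulVec)
    (hdiag : ∀ i j : Fin n, i ≠ j → (Xᵀ * diagonal μ * X) i j = 0)
    (η : ℝ) (hη0 : 0 ≤ η)
    (hη2 : ‖(Xᵀ * diagonal μ * X)⁻¹‖ * ‖Xᵀ‖ * ‖X‖ ≤ 1 + η) :
    ∃ θe : Fin n → ℝ,
      meanField μ P R γ η X θe = 0 ∧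
      (∀ θ' : Fin n → ℝ, meanField μ P R γ η X θ' = 0 → θ' = θe) ∧
      (∀ θ : ℝ → Fin n → ℝ,
        (∀ t : ℝ, 0 ≤ t → HasDerivAt θ (meanField μ P R γ η X (θ t)) t) →
        Filter.Tendsto θ Filter.atTop (nhds θe)) := by
  set M := Xᵀ * diagonal μ * X
  have hM : M.IsDiag := fun i j hij => hdiag i j hij
  have hM0 : ∀ j, 0 < M j j :=
    transpose_mul_diagonal_mul_self_apply_pos (fun p => (hμ p).1) hXrank
  have hX : ∀ j, ‖Xᵀ‖ * ‖X‖ ≤ (1 + η) * M j j := fun j => by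
    have hinv := hM.inv_abs_apply_le_linfty_opNorm_inv (fun k => (hM0 k).ne') j
    rw [abs_of_pos (hM0 j)] at hinv
    have := (mul_le_mul_of_nonneg_right (mul_le_mul_of_nonneg_right hinv (norm_nonneg _))
      (norm_nonneg _)).trans hη2
    rwa [mul_assoc, inv_mul_le_iff₀ (hM0 j), mul_comm (M j j)] at this
  have hF := abs_meanField_sub_add_le (R := R) hM hγ.1.le
    (sum_abs_transpose_mul_diagonal_mul_apply_le hX0 (fun p => (hμ p).1.le) (fun p => (hμ p).2)
      hP0 hP1) hX
  have ha : ∀ j, 0 < (1 + η) * M j j := fun j => mul_pos (by linarith) (hM0 j)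
  obtain ⟨θe, hθe, huniq⟩ := existsUnique_zero_of_abs_sub_add_mul_le ha hγ.1.le hγ.2 hF
  refine ⟨θe, hθe, huniq, fun θ hθ => tendsto_of_hasDerivAt_of_abs_add_mul_le ha hγ.2 ?_ hθ⟩
  intro ψ j
  simpa [hθe] using hF ψ θe j

/-- Under the regularization conditions on `η`, the mean ODE field `f` of regularized
Q-learning has a unique zero `θ_e`, which is the globally asymptotically stable
equilibrium of the ODE `θ′ = f(θ)`. -/
theorem stmt_14 {S A : Type*} [Fintype S] [Fintype A] [Nonempty S] [Nonempty A]
    [DecidableEq S] [DecidableEq A] {n : ℕ}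
    (μ : S × A → ℝ) (hμ : ∀ p, 0 < μ p ∧ μ p ≤ 1)
    (P : Matrix (S × A) S ℝ) (hP0 : ∀ p s, 0 ≤ P p s) (hP1 : ∀ p, ∑ s, P p s = 1)
    (R : S × A → ℝ) (γ : ℝ) (hγ : γ ∈ Set.Ioo (0 : ℝ) 1)
    (X : Matrix (S × A) (Fin n) ℝ) (hX0 : ∀ p j, 0 ≤ X p j)
    (hXrank : Function.Injective X.mulVec)
    (hdiag : ∀ i j : Fin n, i ≠ j → (Xᵀ * diagonal μ * X) i j = 0)
    (Pi : (S → A) → Matrix S (S × A) ℝ)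
    (hPi : ∀ (π : S → A) (s : S) (p : S × A),
      Pi π s p = if p.1 = s ∧ p.2 = π s then 1 else 0)
    (η : ℝ) (hη0 : 0 ≤ η)
    (hη1 : η > (Finset.univ.sup' Finset.univ_nonempty
        fun q : (S → A) × (S × A) =>
          γ * (μ ᵥ* (P * Pi q.1)) q.2 / (2 * μ q.2)) - (2 - γ) / 2)
    (hη2 : ‖(Xᵀ * diagonal μ * X)⁻¹‖ * ‖Xᵀ‖ * ‖X‖ ≤ 1 + η) :
    ∃ θe : Fin n → ℝ,
      meanField μ P R γ η X θe = 0 ∧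
      (∀ θ' : Fin n → ℝ, meanField μ P R γ η X θ' = 0 → θ' = θe) ∧
      (∀ θ : ℝ → Fin n → ℝ,
        (∀ t : ℝ, 0 ≤ t → HasDerivAt θ (meanField μ P R γ η X (θ t)) t) →
        Filter.Tendsto θ Filter.atTop (nhds θe)) :=
  stmt_14_general μ hμ P hP0 hP1 R γ hγ X hX0 hXrank hdiag η hη0 hη2
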